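/- The set of n×n real symmetric positive definite matrices forms a commutative group under logarithmic multiplication S₁ ⊙ S₂ := exp(log S₁ + log S₂): the operation ⊙ maps pairs of SPD matrices to SPD matrices, is commutative and associative, the identity matrix Id is a two-sided identity (S ⊙ Id = S), and the matrix inverse is the group inverse (S ⊙ S⁻¹ = Id). -/

import Mathlib

open Matrix

/-- Squared Frobenius norm of a square matrix. -/
noncomputable def frobSq {n : ℕ} (M : Matrix (Fin n) (Fin n) ℝ) : ℝ := ∑ i, ∑ j, (M i j) ^ 2

/-- Frobenius norm of a square matrix. -/
noncomputable def frobNorm {n : ℕ} (M : Matrix (Fin n) (Fin n) ℝ) : ℝ := Real.sqrt (frobSq M)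

/-- The (unique) symmetric matrix logarithm of a symmetric positive definite matrix:
`symLog S` is the symmetric matrix `A` with `exp A = S` whenever such a matrix exists
(which is the case exactly when `S` is SPD), and is junk (`0`) otherwise. -/
noncomputable def symLog {n : ℕ} (S : Matrix (Fin n) (Fin n) ℝ) : Matrix (Fin n) (Fin n) ℝ :=
  letI := Classical.propDecidable
    (∃ A : Matrix (Fin n) (Fin n) ℝ, A.IsSymm ∧ NormedSpace.exp A = S)
  if h : ∃ A : Matrix (Fin n) (Fin n) ℝ, A.IsSymm ∧ NormedSpace.exp A = S then h.choose else 0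

/-- The Log-Euclidean distance `d_LEM(S₁, S₂) = ‖log S₁ − log S₂‖_F` on SPD matrices. -/
noncomputable def dLEM {n : ℕ} (S₁ S₂ : Matrix (Fin n) (Fin n) ℝ) : ℝ :=
  frobNorm (symLog S₁ - symLog S₂)

/-- Logarithmic multiplication of SPD matrices: `P ⊙ S = exp(log P + log S)`. -/
noncomputable def odot {n : ℕ} (P S : Matrix (Fin n) (Fin n) ℝ) : Matrix (Fin n) (Fin n) ℝ :=
  NormedSpace.exp (symLog P + symLog S)

/-!
On symmetric matrices `exp` is injective, `CFC.log` being a left inverse, and every SPD matrix is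
the exponential of a symmetric one. Hence `symLog (exp A) = A` and `exp A ⊙ exp B = exp (A + B)`:
`⊙` is addition of symmetric matrices transported along `exp`, and the group laws come from those
of `+`, with `exp 0 = 1` and `(exp A)⁻¹ = exp (-A)`.
-/

section

open scoped ComplexOrder in
theorem Matrix.IsHermitian.posDef_exp {m 𝕜 : Type*} [Fintype m] [DecidableEq m] [RCLike 𝕜]
    {A : Matrix m m 𝕜} (hA : A.IsHermitian) : (NormedSpace.exp A).PosDef := by
  set B := NormedSpace.exp ((1 / 2 : ℝ) • A)
  have hB : Bᴴ = B := (hA.smul (IsSelfAdjoint.all _)).exp.eq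
  have hsq : NormedSpace.exp A = Bᴴ * B := by
    rw [hB, ← exp_add_of_commute _ _ (Commute.refl _), ← add_smul]
    norm_num
  rw [hsq]
  exact .conjTranspose_mul_self B (mulVec_injective_iff_isUnit.mpr (isUnit_exp _))

attribute [local instance] Matrix.instL2OpNormedRing Matrix.instL2OpNormedAlgebra

variable {m : Type*} [Fintype m] [DecidableEq m]

theorem Matrix.IsHermitian.exp_inj {A B : Matrix m m ℝ} (hA : A.IsHermitian)
    (hB : B.IsHermitian) : NormedSpace.exp A = NormedSpace.exp B ↔ A = B :=
  ⟨fun h => by rw [← CFC.log_exp A hA, h, CFC.log_exp B hB], congrArg _⟩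

open scoped MatrixOrder in
theorem Matrix.PosDef.exists_isHermitian_exp_eq {S : Matrix m m ℝ} (hS : S.PosDef) :
    ∃ A : Matrix m m ℝ, A.IsHermitian ∧ NormedSpace.exp A = S :=
  ⟨CFC.log S, IsSelfAdjoint.log, CFC.exp_log S hS.isStrictlyPositive⟩

end

section

variable {n : ℕ}

theorem symLog_exp {A : Matrix (Fin n) (Fin n) ℝ} (hA : A.IsHermitian) :
    symLog (NormedSpace.exp A) = A := by
  have hex : ∃ B : Matrix (Fin n) (Fin n) ℝ, B.IsSymm ∧ NormedSpace.exp B = NormedSpace.exp A :=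
    ⟨A, isHermitian_iff_isSymm.mp hA, rfl⟩
  obtain ⟨hsymm, hexp⟩ := hex.choose_spec
  rw [symLog, dif_pos hex]
  exact ((isHermitian_iff_isSymm.mpr hsymm).exp_inj hA).mp hexp

theorem odot_exp_exp {A B : Matrix (Fin n) (Fin n) ℝ} (hA : A.IsHermitian) (hB : B.IsHermitian) :
    odot (NormedSpace.exp A) (NormedSpace.exp B) = NormedSpace.exp (A + B) := by
  rw [odot, symLog_exp hA, symLog_exp hB]

end

/-- The SPD matrices form a commutative group under logarithmic multiplication
`S₁ ⊙ S₂ = exp(log S₁ + log S₂)`: closure, commutativity, associativity, identity `Id`, and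
inverses given by the matrix inverse. -/
theorem spd_commGroup_under_odot {n : ℕ} :
    (∀ S₁ S₂ : Matrix (Fin n) (Fin n) ℝ, S₁.PosDef → S₂.PosDef → (odot S₁ S₂).PosDef)
    ∧ (∀ S₁ S₂ : Matrix (Fin n) (Fin n) ℝ, S₁.PosDef → S₂.PosDef → odot S₁ S₂ = odot S₂ S₁)
    ∧ (∀ S₁ S₂ S₃ : Matrix (Fin n) (Fin n) ℝ, S₁.PosDef → S₂.PosDef → S₃.PosDef →
        odot (odot S₁ S₂) S₃ = odot S₁ (odot S₂ S₃))
    ∧ (∀ S : Matrix (Fin n) (Fin n) ℝ, S.PosDef → odot S 1 = S)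
    ∧ (∀ S : Matrix (Fin n) (Fin n) ℝ, S.PosDef → odot S S⁻¹ = 1) := by
  refine ⟨?closure, ?comm, ?assoc, ?one, ?inv⟩
  case closure =>
    intro S₁ S₂ h₁ h₂
    obtain ⟨A₁, hA₁, rfl⟩ := h₁.exists_isHermitian_exp_eq
    obtain ⟨A₂, hA₂, rfl⟩ := h₂.exists_isHermitian_exp_eq
    rw [odot_exp_exp hA₁ hA₂]
    exact (hA₁.add hA₂).posDef_exp
  case comm =>
    intro S₁ S₂ _ _
    rw [odot, odot, add_comm]
  case assoc =>
    intro S₁ S₂ S₃ h₁ h₂ h₃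
    obtain ⟨A₁, hA₁, rfl⟩ := h₁.exists_isHermitian_exp_eq
    obtain ⟨A₂, hA₂, rfl⟩ := h₂.exists_isHermitian_exp_eq
    obtain ⟨A₃, hA₃, rfl⟩ := h₃.exists_isHermitian_exp_eq
    rw [odot_exp_exp hA₁ hA₂, odot_exp_exp (hA₁.add hA₂) hA₃, odot_exp_exp hA₂ hA₃,
      odot_exp_exp hA₁ (hA₂.add hA₃), add_assoc]
  case one =>
    intro S hS
    obtain ⟨A, hA, rfl⟩ := hS.exists_isHermitian_exp_eq
    rw [← NormedSpace.exp_zero, odot_exp_exp hA isHermitian_zero, add_zero]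
  case inv =>
    intro S hS
    obtain ⟨A, hA, rfl⟩ := hS.exists_isHermitian_exp_eq
    rw [← Matrix.exp_neg, odot_exp_exp hA hA.neg, add_neg_cancel, NormedSpace.exp_zero]
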